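/- arXiv:2302.01097 — 4 statements merged into one kernel-verified Lean document; each statement's English description precedes it below -/
import Mathlib

section
/- Let L be a finite tree language over a ranked alphabet Σ and let STAut_L be its SubTree automaton. Then for every tree s over Σ, the set of states reached on s satisfies Δ(s) = {s} if s ∈ SubTreeSet(L), and Δ(s) = ∅ otherwise. -/
/-- Trees over a ranked alphabet `σ` with arity function `ar`:
`t = f(t₁,…,t_k)` where `k = ar f`. -/
inductive RTree (σ : Type) (ar : σ → ℕ) : Type where
  | node : (f : σ) → (Fin (ar f) → RTree σ ar) → RTree σ ar

variable {σ : Type} {ar : σ → ℕ}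

/-- Number of nodes of a tree. -/
def RTree.size : RTree σ ar → ℕ
  | .node _ ts => 1 + ∑ i, (ts i).size

/-- The set `SubTree(t)` of subtrees of a tree. -/
def RTree.subTree : RTree σ ar → Set (RTree σ ar)
  | .node f ts => insert (.node f ts) (⋃ i, (ts i).subTree)

open Classical in
/-- `SubTreeSeries_t`: the indicator of the whole tree plus the sum of the
series of its immediate subtrees. -/
noncomputable def RTree.subTreeSeries : RTree σ ar → RTree σ ar → ℕ
  | .node f ts, s => (if s = .node f ts then 1 else 0) + ∑ i, (ts i).subTreeSeries s

/-- The subtree of `t` rooted at position `p` (a node given by a list of child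
indices), if `p` is indeed a node of `t`. -/
def RTree.subtreeAt : RTree σ ar → List ℕ → Option (RTree σ ar)
  | t, [] => some t
  | .node f ts, i :: p => if h : i < ar f then (ts ⟨i, h⟩).subtreeAt p else none

/-- `SubTreeSet(L) = ⋃_{t ∈ L} SubTree(t)` for a finite tree language `L`. -/
def subTreeSet (L : Finset (RTree σ ar)) : Set (RTree σ ar) := ⋃ t ∈ L, t.subTree

/-- `SubTreeSeries_L = ∑_{t ∈ L} SubTreeSeries_t`. -/
noncomputable def subTreeSeriesL (L : Finset (RTree σ ar)) (s : RTree σ ar) : ℕ :=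
  ∑ t ∈ L, t.subTreeSeries s

/-- The SubTree kernel of two finite tree languages:
`∑_t SubTreeSeries_X(t) · SubTreeSeries_Y(t)` (finitely supported sum). -/
noncomputable def subTreeKernel (X Y : Finset (RTree σ ar)) : ℕ :=
  ∑ᶠ t, subTreeSeriesL X t * subTreeSeriesL Y t

theorem RTree.subTree_finite (t : RTree σ ar) : t.subTree.Finite := by
  induction t with
  | node f ts ih =>
    rw [RTree.subTree]
    exact (Set.finite_iUnion ih).insert _

theorem subTreeSet_finite (L : Finset (RTree σ ar)) : (subTreeSet L).Finite :=
  Set.Finite.biUnion L.finite_toSet fun t _ => t.subTree_finite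

/-- A Root-Weighted Tree Automaton with weights in `M`:
a finite state type `Q`, a root weight function `ν`, and a transition relation `δ`,
where `δ f q qs` means `(q, f, qs 1, …, qs k) ∈ δ` (with `k = ar f`). -/
structure RWTA (σ : Type) (ar : σ → ℕ) (M : Type) where
  Q : Type
  finQ : Finite Q
  ν : Q → M
  δ : (f : σ) → Q → (Fin (ar f) → Q) → Prop

variable {M : Type}

/-- The set of states reached on a tree:
`Δ(f(t₁,…,t_k)) = δ(f, Δ(t₁), …, Δ(t_k))`. -/
def RWTA.Δ (A : RWTA σ ar M) : RTree σ ar → Set A.Q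
  | .node f ts => {q | ∃ qs, A.δ f q qs ∧ ∀ i, qs i ∈ A.Δ (ts i)}

/-- The formal tree series realized by an RWTA: `P_A(t) = ∑_{q ∈ Δ(t)} ν(q)`
(equal to `0` when `Δ(t) = ∅`). -/
noncomputable def RWTA.P [AddCommMonoid M] (A : RWTA σ ar M) (t : RTree σ ar) : M :=
  ∑ᶠ q ∈ A.Δ t, A.ν q

/-- The SubTree automaton `STAut_L` of a finite tree language `L`: states are the
elements of `SubTreeSet(L)`, root weight of a state `t` is `SubTreeSeries_L(t)`, and
the transitions are `(f(t₁,…,t_k), f, t₁, …, t_k)` for states `f(t₁,…,t_k)`. -/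
noncomputable def STAut (L : Finset (RTree σ ar)) : RWTA σ ar ℕ where
  Q := ↥(subTreeSet L)
  finQ := (subTreeSet_finite L).to_subtype
  ν q := subTreeSeriesL L q.1
  δ f q qs := (q : RTree σ ar) = .node f fun i => (qs i : RTree σ ar)

/-- The product RWTA `A ⊙ B`: states `Q_A × Q_B`, componentwise transitions, and
root weights `ν((p,q)) = ν_A(p) · ν_B(q)`. -/
def RWTA.prod [Mul M] (A B : RWTA σ ar M) : RWTA σ ar M where
  Q := A.Q × B.Q
  finQ := by have := A.finQ; have := B.finQ; exact inferInstance
  ν pq := A.ν pq.1 * B.ν pq.2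
  δ f pq qs := A.δ f pq.1 (fun i => (qs i).1) ∧ B.δ f pq.2 fun i => (qs i).2

lemma RTree.child_mem_subTree {u : RTree σ ar} {f : σ} {ts : Fin (ar f) → RTree σ ar}
    (h : RTree.node f ts ∈ u.subTree) (i : Fin (ar f)) : ts i ∈ u.subTree := by
  induction u with
  | node g us ih =>
    rw [RTree.subTree] at h ⊢
    rcases h with h | h
    · cases h
      exact Set.mem_insert_iff.2 (Or.inr (Set.mem_iUnion.2 ⟨i, by
        cases ts i with
        | node a b => exact Set.mem_insert _ _⟩))
    · rcases Set.mem_iUnion.1 h with ⟨j, hj⟩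
      exact Set.mem_insert_iff.2 (Or.inr (Set.mem_iUnion.2 ⟨j, ih j hj⟩))

lemma child_mem_subTreeSet {L : Finset (RTree σ ar)} {f : σ} {ts : Fin (ar f) → RTree σ ar}
    (h : RTree.node f ts ∈ subTreeSet L) (i : Fin (ar f)) : ts i ∈ subTreeSet L := by
  rcases Set.mem_iUnion₂.1 h with ⟨t, ht, hs⟩
  exact Set.mem_iUnion₂.2 ⟨t, ht, RTree.child_mem_subTree hs i⟩

/-- For the SubTree automaton of `L`, `Δ(s) = {s}` if `s ∈ SubTreeSet(L)`,
and `Δ(s) = ∅` otherwise. -/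
theorem STAut_Δ_eq (L : Finset (RTree σ ar)) (s : RTree σ ar) :
    (∀ h : s ∈ subTreeSet L, (STAut L).Δ s = {⟨s, h⟩}) ∧
      (s ∉ subTreeSet L → (STAut L).Δ s = ∅) := by
  induction s with
  | node f ts ih =>
    constructor
    · intro h
      ext q
      simp only [RWTA.Δ, Set.mem_setOf_eq, Set.mem_singleton_iff]
      constructor
      · rintro ⟨qs, hδ, hmem⟩
        have hq : q.1 = RTree.node f fun i => (qs i).1 := hδ
        have hqs : ∀ i, (qs i).1 = ts i := by
          intro i
          have hi := (ih i).1 (child_mem_subTreeSet h i)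
          have := hmem i
          rw [hi] at this; replace this := Set.eq_of_mem_singleton this
          rw [this]
        apply Subtype.ext
        rw [hq]
        congr 1
        funext i
        exact hqs i
      · rintro rfl
        refine ⟨fun i => (⟨ts i, child_mem_subTreeSet h i⟩ : ↥(subTreeSet L)), rfl, fun i => ?_⟩
        rw [(ih i).1 (child_mem_subTreeSet h i)]
        rfl
    · intro h
      ext q
      simp only [RWTA.Δ, Set.mem_setOf_eq, Set.mem_empty_iff_false, iff_false]
      rintro ⟨qs, hδ, hmem⟩
      have hq : q.1 = RTree.node f fun i => (qs i).1 := hδ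
      by_cases hall : ∀ i, ts i ∈ subTreeSet L
      · have hqs : ∀ i, (qs i).1 = ts i := by
          intro i
          have := hmem i
          rw [(ih i).1 (hall i)] at this; replace this := Set.eq_of_mem_singleton this
          rw [this]
        apply h
        have : q.1 = RTree.node f ts := by
          rw [hq]; congr 1; funext i; exact hqs i
        rw [← this]; exact q.2
      · push_neg at hall
        obtain ⟨i, hi⟩ := hall
        have := hmem i
        rw [(ih i).2 hi] at this
        exact this
end

section
/- Let A_X and A_Y be two RWTAs over a commutative semiring S. Then the product RWTA A_X ⊙ A_Y realizes the Hadamard product of the series realized by A_X and A_Y: for every tree t over Σ, P_{A_X ⊙ A_Y}(t) = P_{A_X}(t) · P_{A_Y}(t). -/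
variable {σ : Type} {ar : σ → ℕ}

variable {M : Type}

theorem finsum_mem_prod_mul {α β R : Type*} [NonUnitalNonAssocSemiring R] {s : Set α} {t : Set β}
    (hs : s.Finite) (ht : t.Finite) (f : α → R) (g : β → R) :
    ∑ᶠ p ∈ s ×ˢ t, f p.1 * g p.2 = (∑ᶠ a ∈ s, f a) * ∑ᶠ b ∈ t, g b := by
  lift s to Finset α using hs
  lift t to Finset β using ht
  rw [← Finset.coe_product, finsum_mem_coe_finset, finsum_mem_coe_finset, finsum_mem_coe_finset,
    Finset.sum_mul_sum, Finset.sum_product]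

theorem RWTA.Δ_prod [Mul M] (A B : RWTA σ ar M) (t : RTree σ ar) :
    (A.prod B).Δ t = A.Δ t ×ˢ B.Δ t := by
  induction t with
  | node f ts ih =>
    ext ⟨p, q⟩
    simp only [RWTA.Δ, ih]
    constructor
    · rintro ⟨pqs, ⟨hA, hB⟩, hmem⟩
      exact ⟨⟨_, hA, fun i => (hmem i).1⟩, ⟨_, hB, fun i => (hmem i).2⟩⟩
    · rintro ⟨⟨ps, hA, hps⟩, ⟨qs, hB, hqs⟩⟩
      exact ⟨fun i => (ps i, qs i), ⟨hA, hB⟩, fun i => ⟨hps i, hqs i⟩⟩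

/-- The product RWTA realizes the Hadamard (pointwise) product of the realized
series: `P_{A⊙B}(t) = P_A(t) · P_B(t)`. -/
theorem prod_realizes_hadamard {S : Type} [CommSemiring S] (A B : RWTA σ ar S)
    (t : RTree σ ar) :
    (A.prod B).P t = A.P t * B.P t := by
  have := A.finQ
  have := B.finQ
  rw [RWTA.P, RWTA.Δ_prod]
  exact finsum_mem_prod_mul (Set.toFinite _) (Set.toFinite _) A.ν B.ν
end

section
/- Let X and Y be finite tree languages over a ranked alphabet Σ. A state (p,q) of the product automaton STAut_X ⊙ STAut_Y is accessible (i.e., (p,q) ∈ Δ_{X⊙Y}(t) for some tree t) if and only if p = q and p ∈ SubTreeSet(X) ∩ SubTreeSet(Y); consequently, the number of accessible states of STAut_X ⊙ STAut_Y equals |SubTreeSet(X) ∩ SubTreeSet(Y)|. -/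
variable {σ : Type} {ar : σ → ℕ}

variable {M : Type}

/- In `STAut_L` the only state reached on a tree `t` is `t` itself, and the product automaton
reaches exactly the pairs of states reached by its factors. Hence the accessible states of
`STAut_X ⊙ STAut_Y` are the diagonal pairs `(t, t)` with `t` a state of both factors. -/

namespace RTree

lemma mem_subTree_self (t : RTree σ ar) : t ∈ t.subTree := by
  cases t with
  | node f ts => rw [subTree]; exact Set.mem_insert _ _

lemma subTree_subset_of_mem {s t : RTree σ ar} (h : s ∈ t.subTree) : s.subTree ⊆ t.subTree := by
  induction t with
  | node f ts ih =>
    rw [subTree] at h ⊢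
    rcases h with rfl | ⟨_, ⟨i, rfl⟩, hs⟩
    · rw [subTree]
    · exact (ih i hs).trans ((Set.subset_iUnion (fun j => (ts j).subTree) i).trans
        (Set.subset_insert _ _))

lemma child_mem_subTree_s16 (f : σ) (ts : Fin (ar f) → RTree σ ar) (i : Fin (ar f)) :
    ts i ∈ (node f ts).subTree := by
  rw [subTree]
  exact Or.inr ⟨_, ⟨i, rfl⟩, (ts i).mem_subTree_self⟩

end RTree

lemma RWTA.mem_prod_Δ [Mul M] {A B : RWTA σ ar M} (p : A.Q) (q : B.Q) (t : RTree σ ar) :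
    ((p, q) : (A.prod B).Q) ∈ (A.prod B).Δ t ↔ p ∈ A.Δ t ∧ q ∈ B.Δ t := by
  induction t generalizing p q with
  | node f ts ih =>
    constructor
    · rintro ⟨pqs, ⟨hp, hq⟩, hpqs⟩
      have hchild i := (ih i (pqs i).1 (pqs i).2).mp (hpqs i)
      exact ⟨⟨_, hp, fun i => (hchild i).1⟩, ⟨_, hq, fun i => (hchild i).2⟩⟩
    · rintro ⟨⟨ps, hp, hps⟩, ⟨qs, hq, hqs⟩⟩
      exact ⟨fun i => (ps i, qs i), ⟨hp, hq⟩, fun i => (ih i _ _).mpr ⟨hps i, hqs i⟩⟩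

lemma mem_STAut_Δ {L : Finset (RTree σ ar)} (q : ↥(subTreeSet L)) (t : RTree σ ar) :
    (q : (STAut L).Q) ∈ (STAut L).Δ t ↔ (q : RTree σ ar) = t := by
  induction t generalizing q with
  | node f ts ih =>
    constructor
    · rintro ⟨qs, hq, hqs⟩
      rw [show (q : RTree σ ar) = _ from hq]
      exact congrArg _ (funext fun i => (ih i (qs i)).mp (hqs i))
    · intro hq
      have hts : ∀ i, ts i ∈ subTreeSet L := child_mem_subTreeSet (hq ▸ q.2)
      exact ⟨fun i => ⟨ts i, hts i⟩, hq, fun i => (ih i _).mpr rfl⟩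

lemma Set.ncard_setOf_coe_fst_eq_coe_snd {α : Type*} (S T : Set α) :
    {z : S × T | (z.1 : α) = z.2}.ncard = (S ∩ T).ncard := by
  rw [← Nat.card_coe_set_eq, ← Nat.card_coe_set_eq]
  refine Nat.card_congr
    { toFun := fun z => ⟨z.1.1, z.1.1.2, z.2 ▸ z.1.2.2⟩
      invFun := fun x => ⟨(⟨x, x.2.1⟩, ⟨x, x.2.2⟩), rfl⟩
      left_inv := ?_
      right_inv := fun _ => rfl }
  rintro ⟨⟨p, q⟩, h⟩
  exact Subtype.ext (Prod.ext rfl (Subtype.ext h))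

lemma prod_STAut_accessible_iff (X Y : Finset (RTree σ ar)) (p : ↥(subTreeSet X))
    (q : ↥(subTreeSet Y)) :
    (∃ t, (p, q) ∈ ((STAut X).prod (STAut Y)).Δ t) ↔ (p : RTree σ ar) = q := by
  constructor
  · rintro ⟨t, ht⟩
    obtain ⟨hp, hq⟩ := (RWTA.mem_prod_Δ (A := STAut X) (B := STAut Y) p q t).mp ht
    exact ((mem_STAut_Δ p t).mp hp).trans ((mem_STAut_Δ q t).mp hq).symm
  · intro h
    exact ⟨p, (RWTA.mem_prod_Δ (A := STAut X) (B := STAut Y) p q p).mpr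
      ⟨(mem_STAut_Δ p p).mpr rfl, (mem_STAut_Δ q p).mpr h.symm⟩⟩

/-- A state `(p,q)` of `STAut_X ⊙ STAut_Y` is accessible iff `p = q` (as trees)
and `p ∈ SubTreeSet(X) ∩ SubTreeSet(Y)`; consequently the number of accessible
states equals `|SubTreeSet(X) ∩ SubTreeSet(Y)|`. -/
theorem prod_STAut_accessible (X Y : Finset (RTree σ ar)) :
    (∀ (p : ↥(subTreeSet X)) (q : ↥(subTreeSet Y)),
        (∃ t, (p, q) ∈ ((STAut X).prod (STAut Y)).Δ t) ↔
          ((p : RTree σ ar) = (q : RTree σ ar) ∧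
            (p : RTree σ ar) ∈ subTreeSet X ∩ subTreeSet Y)) ∧
      {z : ↥(subTreeSet X) × ↥(subTreeSet Y) |
          ∃ t, z ∈ ((STAut X).prod (STAut Y)).Δ t}.ncard =
        (subTreeSet X ∩ subTreeSet Y).ncard := by
  refine ⟨fun p q => ?_, ?_⟩
  · rw [prod_STAut_accessible_iff]
    exact ⟨fun h => ⟨h, p.2, h ▸ q.2⟩, And.left⟩
  · simp only [prod_STAut_accessible_iff]
    exact Set.ncard_setOf_coe_fst_eq_coe_snd _ _
end

section
/- Let X and Y be finite tree languages over a ranked alphabet Σ, and let Z be the set of accessible states of the product automaton STAut_X ⊙ STAut_Y. Then SubTreeKernel(X,Y) = Σ_{z ∈ Z} ν_{X⊙Y}(z), the sum of the root weights of the accessible states of the product automaton. -/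
variable {σ : Type} {ar : σ → ℕ}

variable {M : Type}

theorem RTree.mem_subTree_self_s17 (t : RTree σ ar) : t ∈ t.subTree := by
  cases t
  exact Set.mem_insert _ _

theorem RTree.mem_subTree_node (f : σ) (ts : Fin (ar f) → RTree σ ar) (i : Fin (ar f)) :
    ts i ∈ (RTree.node f ts).subTree :=
  Set.mem_insert_of_mem _ (Set.mem_iUnion_of_mem i (ts i).mem_subTree_self_s17)

theorem RTree.subTree_subset_of_mem_s17 {t s : RTree σ ar} (h : s ∈ t.subTree) :
    s.subTree ⊆ t.subTree := by
  induction t with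
  | node f ts ih =>
    rcases h with rfl | h
    · rfl
    · obtain ⟨i, hi⟩ := Set.mem_iUnion.mp h
      exact (ih i hi).trans
        ((Set.subset_iUnion (fun j => (ts j).subTree) i).trans (Set.subset_insert _ _))

theorem mem_subTreeSet_of_mem_subTree {L : Finset (RTree σ ar)} {t s : RTree σ ar}
    (ht : t ∈ subTreeSet L) (hs : s ∈ t.subTree) : s ∈ subTreeSet L := by
  obtain ⟨u, hu, htu⟩ := Set.mem_iUnion₂.mp ht
  exact Set.mem_biUnion hu (RTree.subTree_subset_of_mem_s17 htu hs)

theorem RTree.support_subTreeSeries (t : RTree σ ar) :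
    Function.support t.subTreeSeries = t.subTree := by
  induction t with
  | node f ts ih =>
    ext s
    classical
    simp [RTree.subTreeSeries, RTree.subTree, ← ih, or_iff_not_imp_left]

theorem support_subTreeSeriesL (L : Finset (RTree σ ar)) :
    Function.support (subTreeSeriesL L) = subTreeSet L := by
  ext s
  simp [subTreeSeriesL, subTreeSet, Finset.sum_eq_zero_iff, ← RTree.support_subTreeSeries]

theorem subTreeKernel_eq_finsum_mem_inter (X Y : Finset (RTree σ ar)) :
    subTreeKernel X Y =
      ∑ᶠ t ∈ subTreeSet X ∩ subTreeSet Y, subTreeSeriesL X t * subTreeSeriesL Y t := by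
  rw [subTreeKernel, ← support_subTreeSeriesL, ← support_subTreeSeriesL, ← Function.support_mul,
    finsum_mem_support]

theorem STAut_Δ (L : Finset (RTree σ ar)) (t : RTree σ ar) :
    (STAut L).Δ t = {q : ↥(subTreeSet L) | (q : RTree σ ar) = t} := by
  induction t with
  | node f ts ih =>
    ext ⟨q, hq⟩
    simp only [RWTA.Δ, ih]
    constructor
    · rintro ⟨qs, hδ, hqs⟩
      exact hδ.trans (congrArg _ (funext hqs))
    · rintro rfl
      exact ⟨fun i => ⟨ts i, mem_subTreeSet_of_mem_subTree hq (RTree.mem_subTree_node f ts i)⟩,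
        rfl, fun _ => rfl⟩

theorem accessible_prod_STAut (X Y : Finset (RTree σ ar)) :
    {z | ∃ t, z ∈ ((STAut X).prod (STAut Y)).Δ t} =
      {z : ↥(subTreeSet X) × ↥(subTreeSet Y) | (z.1 : RTree σ ar) = z.2} := by
  ext ⟨p, q⟩
  simp only [RWTA.Δ_prod, STAut_Δ]
  exact ⟨fun ⟨_, hp, hq⟩ => hp.trans hq.symm, fun h => ⟨_, h, rfl⟩⟩

theorem Set.bijOn_coe_fst_diagonal {α : Type*} (S T : Set α) :
    Set.BijOn (fun z : S × T => (z.1 : α)) {z | (z.1 : α) = z.2} (S ∩ T) := by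
  refine ⟨?_, ?_, ?_⟩
  · rintro ⟨⟨s, hs⟩, ⟨t, ht⟩⟩ (rfl : s = t)
    exact ⟨hs, ht⟩
  · rintro ⟨⟨s, _⟩, ⟨t, _⟩⟩ (rfl : s = t) ⟨⟨s', _⟩, ⟨t', _⟩⟩ (rfl : s' = t') (rfl : s = s')
    rfl
  · rintro t ⟨hS, hT⟩
    exact ⟨(⟨t, hS⟩, ⟨t, hT⟩), rfl, rfl⟩

/-- `SubTreeKernel(X,Y)` equals the sum of the root weights of the accessible
states of the product automaton `STAut_X ⊙ STAut_Y`. -/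
theorem subTreeKernel_eq_sum_accessible_weights (X Y : Finset (RTree σ ar)) :
    subTreeKernel X Y =
      ∑ᶠ z ∈ {z | ∃ t, z ∈ ((STAut X).prod (STAut Y)).Δ t},
        ((STAut X).prod (STAut Y)).ν z := by
  rw [subTreeKernel_eq_finsum_mem_inter, accessible_prod_STAut]
  refine (finsum_mem_eq_of_bijOn _ (Set.bijOn_coe_fst_diagonal _ _) fun z hz => ?_).symm
  change subTreeSeriesL X z.1 * subTreeSeriesL Y z.2 = _
  rw [← show (z.1 : RTree σ ar) = z.2 from hz]
end
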